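/- For all complex numbers z1, z2, the absolute value of the imaginary part of (z2 log|z2|^2 - z1 log|z1|^2)(conj(z2) - conj(z1)) is at most 2|z2 - z1|^2, where z log|z|^2 is interpreted as 0 when z = 0. -/

import Mathlib

open Complex

lemma ch_key (a b d m : ℝ) (ha : 0 < a) (hab : a ≤ b) (hd : b - a ≤ d) (hd0 : 0 ≤ d)
    (hm : |m| ≤ a * d) :
    |Real.log (a ^ 2) - Real.log (b ^ 2)| * |m| ≤ 2 * d ^ 2 := by
  have hb : 0 < b := lt_of_lt_of_le ha hab
  have hlog : Real.log b - Real.log a ≤ b / a - 1 := by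
    have := Real.log_le_sub_one_of_pos (div_pos hb ha)
    rwa [Real.log_div hb.ne' ha.ne'] at this
  have hmono : Real.log a ≤ Real.log b := Real.log_le_log ha hab
  have h1 : |Real.log (a ^ 2) - Real.log (b ^ 2)| = 2 * (Real.log b - Real.log a) := by
    rw [Real.log_pow, Real.log_pow, abs_of_nonpos (by push_cast; linarith)]
    push_cast; ring
  rw [h1]
  have halog : a * (Real.log b - Real.log a) ≤ b - a := by
    have := mul_le_mul_of_nonneg_left hlog ha.le
    calc a * (Real.log b - Real.log a) ≤ a * (b / a - 1) := this
      _ = b - a := by field_simp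
  nlinarith [abs_nonneg m, mul_le_mul_of_nonneg_right halog hd0,
    mul_le_mul_of_nonneg_left hm (by linarith : (0:ℝ) ≤ 2 * (Real.log b - Real.log a))]

/-- Cazenave–Haraux inequality: `|Im((z₂ log|z₂|² - z₁ log|z₁|²)(conj z₂ - conj z₁))| ≤ 2|z₂-z₁|²`.
(Since `Real.log 0 = 0` in Mathlib, the convention `z log|z|² = 0` at `z = 0` is automatic.) -/
theorem cazenave_haraux (z1 z2 : ℂ) :
    |((z2 * (Real.log (‖z2‖ ^ 2) : ℂ) - z1 * (Real.log (‖z1‖ ^ 2) : ℂ)) *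
        ((starRingEnd ℂ) z2 - (starRingEnd ℂ) z1)).im| ≤ 2 * ‖z2 - z1‖ ^ 2 := by
  set L1 := Real.log (‖z1‖ ^ 2) with hL1
  set L2 := Real.log (‖z2‖ ^ 2) with hL2
  set d := ‖z2 - z1‖ with hdd
  have hd0 : 0 ≤ d := norm_nonneg _
  have hid : ((z2 * (L2 : ℂ) - z1 * (L1 : ℂ)) *
      ((starRingEnd ℂ) z2 - (starRingEnd ℂ) z1)).im
      = (L1 - L2) * (z2 * (starRingEnd ℂ) z1).im := by
    simp [Complex.mul_im, Complex.mul_re, Complex.sub_im, Complex.sub_re]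
    ring
  rw [hid, abs_mul]
  set m := (z2 * (starRingEnd ℂ) z1).im with hmm
  have hm1 : |m| ≤ ‖z1‖ * d := by
    have h2 : m = ((z2 - z1) * (starRingEnd ℂ) z1).im := by
      simp [hmm, Complex.mul_im, Complex.sub_im, Complex.sub_re]; ring
    rw [h2]
    calc |((z2 - z1) * (starRingEnd ℂ) z1).im| ≤ ‖(z2 - z1) * (starRingEnd ℂ) z1‖ :=
          Complex.abs_im_le_norm _
      _ = ‖z1‖ * d := by rw [norm_mul, Complex.norm_conj]; ring
  have hm2 : |m| ≤ ‖z2‖ * d := by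
    have h2 : m = (z2 * ((starRingEnd ℂ) z1 - (starRingEnd ℂ) z2)).im := by
      simp [hmm, Complex.mul_im, Complex.sub_im, Complex.sub_re]; ring
    rw [h2]
    calc |(z2 * ((starRingEnd ℂ) z1 - (starRingEnd ℂ) z2)).im|
        ≤ ‖z2 * ((starRingEnd ℂ) z1 - (starRingEnd ℂ) z2)‖ := Complex.abs_im_le_norm _
      _ = ‖z2‖ * d := by
          rw [norm_mul, ← map_sub, Complex.norm_conj, norm_sub_rev, ← hdd]
  rcases eq_or_ne z1 0 with h1 | h1
  · have : m = 0 := by simp [hmm, h1]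
    rw [this, abs_zero, mul_zero]
    positivity
  rcases eq_or_ne z2 0 with h2 | h2
  · have : m = 0 := by simp [hmm, h2]
    rw [this, abs_zero, mul_zero]
    positivity
  have ha1 : 0 < ‖z1‖ := norm_pos_iff.mpr h1
  have ha2 : 0 < ‖z2‖ := norm_pos_iff.mpr h2
  have hsub : |‖z2‖ - ‖z1‖| ≤ d := by
    rw [hdd]; exact abs_norm_sub_norm_le z2 z1
  rw [abs_le] at hsub
  rcases le_total (‖z1‖) (‖z2‖) with hle | hle
  · exact ch_key _ _ _ _ ha1 hle (by linarith) hd0 hm1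
  · rw [abs_sub_comm]
    exact ch_key _ _ _ _ ha2 hle (by linarith) hd0 hm2
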